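/- arXiv:2409.04212 — 5 statements merged into one kernel-verified Lean document; each statement's English description precedes it below -/
import Mathlib

section
/- Let x ∈ ℤ≥0^t with ‖x‖₁ > K, where K ≥ t. Then there exists x̃ ∈ ℤ≥0^t with x̃ ≤ x componentwise, every component of x - x̃ even, and ‖x̃‖₁ ∈ {K-1, K}. -/
open Finset

lemma aux7 : ∀ (n t : ℕ) (x : Fin t → ℤ), (∀ j, 0 ≤ x j) → ∀ S : ℤ,
    (∑ j, x j % 2) ≤ S → (∑ j, x j) - S = 2 * n →
    ∃ y : Fin t → ℤ, (∀ j, 0 ≤ y j ∧ y j ≤ x j) ∧ (∀ j, 2 ∣ (x j - y j)) ∧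
      (∑ j, y j) = S := by
  intro n
  induction n with
  | zero =>
    intro t x hx S hlo hsum
    push_cast at hsum
    exact ⟨x, fun j => ⟨hx j, le_refl _⟩, fun j => ⟨0, by ring⟩, by linarith⟩
  | succ n ih =>
    intro t x hx S hlo hsum
    have hterm : ∀ j, 0 ≤ x j - x j % 2 ∧ 2 ∣ (x j - x j % 2) := by
      intro j
      constructor
      · have := Int.emod_emod_of_dvd (x j) (dvd_refl 2)
        have h1 : x j % 2 < 2 := Int.emod_lt_of_pos _ (by norm_num)
        have h2 : x j % 2 ≤ x j := by
          have := hx j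
          rcases Int.emod_two_eq (x j) with h | h <;> omega
        linarith
      · exact Int.dvd_self_sub_of_emod_eq rfl
    push_cast at hsum
    have hbig : 2 ≤ ∑ j, (x j - x j % 2) := by
      rw [Finset.sum_sub_distrib]
      have hn : (0:ℤ) ≤ (n:ℤ) := Int.natCast_nonneg n
      linarith
    have hexj : ∃ j, 2 ≤ x j - x j % 2 := by
      by_contra h
      push_neg at h
      have hall : ∀ j ∈ Finset.univ, x j - x j % 2 = 0 := by
        intro j _
        have h1 := (hterm j).1
        have h2 := (hterm j).2
        have h3 := h j
        omega
      rw [Finset.sum_eq_zero hall] at hbig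
      omega
    obtain ⟨j, hj⟩ := hexj
    have hjmod : 0 ≤ x j % 2 := Int.emod_nonneg _ (by norm_num)
    set x' := Function.update x j (x j - 2) with hx'
    have hx'j : x' j = x j - 2 := Function.update_self j _ x
    have hx'ne : ∀ k, k ≠ j → x' k = x k := fun k hk => Function.update_of_ne hk _ x
    have hx'le : ∀ k, x' k ≤ x k := by
      intro k
      by_cases hk : k = j
      · subst hk; rw [hx'j]; omega
      · rw [hx'ne k hk]
    have hx'nonneg : ∀ k, 0 ≤ x' k := by
      intro k
      by_cases hk : k = j
      · subst hk; rw [hx'j]; omega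
      · rw [hx'ne k hk]; exact hx k
    have hsum' : (∑ k, x' k) = (∑ k, x k) - 2 := by
      rw [hx', Finset.sum_update_of_mem (Finset.mem_univ j),
        Finset.sdiff_singleton_eq_erase, ← Finset.sum_erase_add _ _ (Finset.mem_univ j)]
      ring
    have hmod' : (∑ k, x' k % 2) = ∑ k, x k % 2 := by
      apply Finset.sum_congr rfl
      intro k _
      by_cases hk : k = j
      · subst hk; rw [hx'j]; omega
      · rw [hx'ne k hk]
    obtain ⟨y, hy1, hy2, hy3⟩ := ih t x' hx'nonneg S (by rw [hmod']; exact hlo)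
      (by rw [hsum']; linarith)
    refine ⟨y, fun k => ⟨(hy1 k).1, le_trans (hy1 k).2 (hx'le k)⟩, ?_, hy3⟩
    intro k
    by_cases hk : k = j
    · subst hk
      obtain ⟨c, hc⟩ := hy2 k
      rw [hx'j] at hc
      exact ⟨c + 1, by linarith⟩
    · have := hy2 k
      rwa [hx'ne k hk] at this

/-- Construction of a reduced vector `y ≤ x` with `x - y` even componentwise and
1-norm `K-1` or `K`. -/
theorem stmt7 (t K : ℕ) (hK1 : 1 ≤ K) (hKt : t ≤ K) (x : Fin t → ℤ)
    (hx : ∀ j, 0 ≤ x j) (hsum : (K : ℤ) < ∑ j, x j) :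
    ∃ y : Fin t → ℤ, (∀ j, 0 ≤ y j ∧ y j ≤ x j) ∧ (∀ j, 2 ∣ (x j - y j)) ∧
      ((∑ j, y j) = (K : ℤ) - 1 ∨ (∑ j, y j) = (K : ℤ)) := by
  have hO : (∑ j, x j % 2) ≤ t := by
    calc (∑ j, x j % 2) ≤ ∑ _j : Fin t, (1 : ℤ) := by
          apply Finset.sum_le_sum
          intro k _
          have := Int.emod_lt_of_pos (x k) (show (0:ℤ) < 2 by norm_num)
          omega
      _ = t := by simp
  have hOpar : 2 ∣ ((∑ j, x j) - ∑ j, x j % 2) := by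
    rw [← Finset.sum_sub_distrib]
    exact Finset.dvd_sum fun k _ => Int.dvd_self_sub_of_emod_eq rfl
  by_cases hpar : 2 ∣ ((∑ j, x j) - K)
  · obtain ⟨c, hc⟩ := hpar
    have hc0 : 0 ≤ c := by linarith
    have htK : (t : ℤ) ≤ K := by exact_mod_cast hKt
    obtain ⟨y, h1, h2, h3⟩ := aux7 c.toNat t x hx K
      (by linarith)
      (by rw [Int.toNat_of_nonneg hc0]; linarith)
    exact ⟨y, h1, h2, Or.inr h3⟩
  · have hpar' : 2 ∣ ((∑ j, x j) - (K - 1)) := by omega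
    obtain ⟨c, hc⟩ := hpar'
    have hc0 : 0 ≤ c := by linarith
    have hOK : (∑ j, x j % 2) ≤ (K : ℤ) - 1 := by
      have htK : (t : ℤ) ≤ K := by exact_mod_cast hKt
      -- sum of mods ≢ K mod 2
      obtain ⟨d, hd⟩ := hOpar
      omega
    obtain ⟨y, h1, h2, h3⟩ := aux7 c.toNat t x hx ((K : ℤ) - 1) hOK
      (by rw [Int.toNat_of_nonneg hc0]; linarith)
    exact ⟨y, h1, h2, Or.inl h3⟩
end

section
/- Consider the n-fold system A x = b where the lower part of the matrix consists of blocks (1,...,1) (so block i of x must sum to b_{r+i}), the matrices A_i ∈ ℤ^{r×t_i} have entries of absolute value at most Δ, and the system has a nonnegative integer solution. Then it has a nonnegative integer solution x = (x₁,...,xₙ) in which every block satisfies |supp(xₖ)| ≤ 2(r+1) log₂(4(r+1)Δ). -/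
/-!
Fix a solution `y`. Appending a row of ones to `A k` merges the block's share of the upper
rows and its block-sum constraint into the single equation `B k *ᵥ x k = B k *ᵥ y k`, so the
blocks can be sparsified independently.

For one block `B` with `m` rows, take a nonnegative solution `x` of `B *ᵥ x = B *ᵥ y` of
minimal support size `s`. All `2 ^ s` subsets of its support have column sums in a box with
`(2sΔ + 1) ^ m` points, so if `2 ^ s` is larger two distinct subsets have equal column sums; the
difference of their indicators is a `{-1, 0, 1}` kernel vector supported in `supp x`, and moving
`x` along it until a coordinate vanishes yields a sparser solution. Hence
`2 ^ s ≤ (2sΔ + 1) ^ m`, which forces `s ≤ 2m log₂(4mΔ)` since `log₂ u ≤ u / 2` for `u ≥ 4`.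
-/

open Finset Matrix Real

lemma logb_two_le_half_self {u : ℝ} (hu : 4 ≤ u) : logb 2 u ≤ u / 2 := by
  have he : exp 1 ≤ 4 := (exp_one_lt_d9.trans (by norm_num)).le
  have h := log_div_self_antitoneOn (a := 4) (b := u) he (he.trans hu) hu
  have h4 : log 4 = 2 * log 2 := by
    rw [show (4 : ℝ) = 2 ^ 2 by norm_num, log_pow]; norm_num
  have hl2 : 0 < log 2 := log_pos one_lt_two
  simp only at h
  rw [h4, div_le_div_iff₀ (by linarith) (by norm_num)] at h
  rw [logb, div_le_div_iff₀ hl2 (by norm_num)]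
  nlinarith

lemma le_two_mul_logb_of_two_pow_le {m Δ s : ℕ} (hm : 1 ≤ m) (hΔ : 1 ≤ Δ)
    (h : 2 ^ s ≤ (2 * s * Δ + 1) ^ m) :
    (s : ℝ) ≤ 2 * m * logb 2 (4 * m * Δ) := by
  by_contra! hs
  have hm' : (1 : ℝ) ≤ m := by exact_mod_cast hm
  have hΔ' : (1 : ℝ) ≤ Δ := by exact_mod_cast hΔ
  set L := logb 2 (4 * m * Δ)
  have hL : 2 ≤ L := by
    have : logb 2 4 = 2 := by
      rw [show (4 : ℝ) = 2 ^ (2 : ℕ) by norm_num, logb_pow, logb_self_eq_one one_lt_two]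
      norm_num
    rw [← this]
    exact logb_le_logb_of_le one_lt_two (by norm_num) (by nlinarith)
  set u : ℝ := s / m
  have hsu : (s : ℝ) = m * u := (mul_div_cancel₀ _ (by positivity)).symm
  have hu : 2 * L < u := by
    rw [lt_div_iff₀ (by linarith)]; linarith
  have hs1 : (1 : ℝ) ≤ s := by nlinarith
  have hcount : (s : ℝ) ≤ m * logb 2 (2 * s * Δ + 1) := by
    have h' : (2 : ℝ) ^ s ≤ (2 * s * Δ + 1) ^ m := by exact_mod_cast h
    have := logb_le_logb_of_le one_lt_two (by positivity) h'
    rwa [logb_pow, logb_pow, logb_self_eq_one one_lt_two, mul_one] at this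
  have hsplit : logb 2 (2 * s * Δ + 1) ≤ L + logb 2 u := by
    calc logb 2 (2 * s * Δ + 1) ≤ logb 2 (4 * m * Δ * u) :=
          logb_le_logb_of_le one_lt_two (by positivity)
            (by rw [show 4 * m * Δ * u = 4 * Δ * (s : ℝ) by rw [hsu]; ring]; nlinarith)
      _ = L + logb 2 u := logb_mul (by positivity) (by positivity)
  have hlog : logb 2 u ≤ u / 2 := logb_two_le_half_self (by linarith)
  nlinarith

section SupportReduction

variable {ι κ : Type*} [Fintype κ] (B : Matrix ι κ ℤ)

lemma mulVec_indicator_one_apply (S : Finset κ) (i : ι) :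
    (B *ᵥ (S : Set κ).indicator 1) i = ∑ j ∈ S, B i j := by
  classical
  simp only [mulVec, dotProduct, Set.indicator_apply, mem_coe, Pi.one_apply, mul_ite, mul_one,
    mul_zero, sum_ite_mem, univ_inter]

lemma abs_mulVec_indicator_one_le {Δ : ℤ} (hB : ∀ i j, |B i j| ≤ Δ) (S : Finset κ) (i : ι) :
    |(B *ᵥ (S : Set κ).indicator 1) i| ≤ #S * Δ := by
  rw [mulVec_indicator_one_apply]
  calc |∑ j ∈ S, B i j| ≤ ∑ j ∈ S, |B i j| := abs_sum_le_sum_abs _ _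
    _ ≤ #S • Δ := sum_le_card_nsmul _ _ _ fun j _ => hB i j
    _ = #S * Δ := nsmul_eq_mul _ _

lemma exists_nonneg_mulVec_eq_card_support_lt {x g : κ → ℤ} (hx : 0 ≤ x) (hg : g ≤ 1)
    (hgx : ∀ j, g j ≠ 0 → x j ≠ 0) (hBg : B *ᵥ g = 0) (hg₁ : ∃ j, g j = 1) :
    ∃ x', 0 ≤ x' ∧ B *ᵥ x' = B *ᵥ x ∧ #{j | x' j ≠ 0} < #{j | x j ≠ 0} := by
  obtain ⟨j₀, hj₀⟩ := hg₁
  obtain ⟨j₁, hj₁, hmin⟩ := exists_min_image {j | g j = 1} x ⟨j₀, by simpa using hj₀⟩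
  simp only [mem_filter, mem_univ, true_and] at hj₁ hmin
  have hg_cases : ∀ j, g j = 1 ∨ g j ≤ 0 := fun j => by
    have : g j ≤ 1 := hg j
    omega
  -- `x j₁` is the least `x j` over `g j = 1`, so `x - x j₁ • g` stays nonnegative.
  refine ⟨x - x j₁ • g, fun j => ?_, ?_, card_lt_card ?_⟩
  · rcases hg_cases j with h | h
    · simpa [h] using hmin j h
    · have h₁ : 0 ≤ x j₁ := hx j₁
      have hj : 0 ≤ x j := hx j
      simp only [Pi.zero_apply, Pi.sub_apply, Pi.smul_apply, smul_eq_mul]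
      nlinarith
  · rw [mulVec_sub, mulVec_smul, hBg, smul_zero, sub_zero]
  · refine (ssubset_iff_of_subset fun j => ?_).2 ⟨j₁, ?_, ?_⟩
    · simp only [mem_filter, mem_univ, true_and, Pi.sub_apply, Pi.smul_apply, smul_eq_mul]
      intro h hxj
      have : g j = 0 := by_contra fun hgj => hgx j hgj hxj
      simp [hxj, this] at h
    · simpa using hgx j₁ (by simp [hj₁])
    · simp [hj₁]

lemma exists_card_support_lt_of_mulVec_indicator_eq {x : κ → ℤ} (hx : 0 ≤ x) {S T : Finset κ}
    (hS : ∀ j ∈ S, x j ≠ 0) (hT : ∀ j ∈ T, x j ≠ 0) (hST : S ≠ T)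
    (heq : B *ᵥ (S : Set κ).indicator 1 = B *ᵥ (T : Set κ).indicator 1) :
    ∃ x', 0 ≤ x' ∧ B *ᵥ x' = B *ᵥ x ∧ #{j | x' j ≠ 0} < #{j | x j ≠ 0} := by
  wlog hj : ∃ j ∈ S, j ∉ T generalizing S T
  · obtain ⟨j, hjT, hjS⟩ : ∃ j ∈ T, j ∉ S := by
      by_contra! h
      exact hST (Subset.antisymm (fun j hjS => by_contra fun hjT => hj ⟨j, hjS, hjT⟩) h)
    exact this hT hS hST.symm heq.symm ⟨j, hjT, hjS⟩
  obtain ⟨j₀, hj₀S, hj₀T⟩ := hj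
  classical
  refine exists_nonneg_mulVec_eq_card_support_lt B hx
    (g := (S : Set κ).indicator 1 - (T : Set κ).indicator 1) (fun j => ?_) (fun j hj => ?_)
    (by rw [mulVec_sub, heq, sub_self]) ⟨j₀, by simp [hj₀S, hj₀T]⟩
  · simp only [Pi.sub_apply, Set.indicator_apply, Pi.one_apply]
    split_ifs <;> norm_num
  · have hj' : j ∈ S ∨ j ∈ T := by
      by_contra! h
      simp [h.1, h.2] at hj
    exact hj'.elim (hS j) (hT j)

lemma exists_subsets_ne_mulVec_indicator_eq [Fintype ι] {Δ : ℕ} (hB : ∀ i j, |B i j| ≤ Δ)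
    (U : Finset κ) (hU : (2 * #U * Δ + 1) ^ Fintype.card ι < 2 ^ #U) :
    ∃ S ⊆ U, ∃ T ⊆ U, S ≠ T ∧ B *ᵥ (S : Set κ).indicator 1 = B *ᵥ (T : Set κ).indicator 1 := by
  classical
  set box := Fintype.piFinset fun _ : ι => Icc (-(#U * Δ : ℤ)) (#U * Δ)
  have hbox : #box = (2 * #U * Δ + 1) ^ Fintype.card ι := by
    simp only [box, Fintype.card_piFinset, Int.card_Icc, prod_const, card_univ]
    rw [show (#U : ℤ) * Δ + 1 - -(#U * Δ) = ((2 * #U * Δ + 1 : ℕ) : ℤ) by push_cast; ring,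
      Int.toNat_natCast]
  have hmaps : ∀ S ∈ U.powerset, B *ᵥ (S : Set κ).indicator 1 ∈ box := by
    intro S hS
    simp only [box, Fintype.mem_piFinset, mem_Icc, ← abs_le]
    intro i
    refine (abs_mulVec_indicator_one_le B hB S i).trans ?_
    gcongr
    exact mem_powerset.1 hS
  obtain ⟨S, hS, T, hT, hST, heq⟩ := exists_ne_map_eq_of_card_lt_of_maps_to
    (by rwa [hbox, card_powerset]) hmaps
  exact ⟨S, mem_powerset.1 hS, T, mem_powerset.1 hT, hST, heq⟩

lemma two_pow_card_support_le_of_minimal [Fintype ι] {Δ : ℕ} (hB : ∀ i j, |B i j| ≤ Δ)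
    {x : κ → ℤ} (hx : 0 ≤ x)
    (hmin : ∀ x', 0 ≤ x' → B *ᵥ x' = B *ᵥ x → #{j | x j ≠ 0} ≤ #{j | x' j ≠ 0}) :
    2 ^ #{j | x j ≠ 0} ≤ (2 * #{j | x j ≠ 0} * Δ + 1) ^ Fintype.card ι := by
  by_contra! h
  obtain ⟨S, hS, T, hT, hST, heq⟩ := exists_subsets_ne_mulVec_indicator_eq B hB _ h
  obtain ⟨x', hx', hBx', hlt⟩ :=
    exists_card_support_lt_of_mulVec_indicator_eq B hx (fun j hj => (mem_filter.1 (hS hj)).2)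
      (fun j hj => (mem_filter.1 (hT hj)).2) hST heq
  exact (hmin x' hx' hBx').not_gt hlt

end SupportReduction

theorem exists_nonneg_mulVec_eq_card_support_le {ι κ : Type*} [Fintype ι] [Nonempty ι]
    [Fintype κ] (B : Matrix ι κ ℤ) {Δ : ℕ} (hΔ : 1 ≤ Δ) (hB : ∀ i j, |B i j| ≤ Δ)
    {y : κ → ℤ} (hy : 0 ≤ y) :
    ∃ x, 0 ≤ x ∧ B *ᵥ x = B *ᵥ y ∧
      (#{j | x j ≠ 0} : ℝ) ≤ 2 * Fintype.card ι * logb 2 (4 * Fintype.card ι * Δ) := by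
  let supportCard (x : κ → ℤ) := #{j | x j ≠ 0}
  set sols := {x : κ → ℤ | 0 ≤ x ∧ B *ᵥ x = B *ᵥ y}
  obtain ⟨x, ⟨hx, hBx⟩, hmin⟩ : ∃ x ∈ sols, ∀ x' ∈ sols, supportCard x ≤ supportCard x' :=
    ⟨_, Function.argminOn_mem supportCard sols ⟨y, hy, rfl⟩,
      fun x' hx' => Function.argminOn_le supportCard sols hx'⟩
  refine ⟨x, hx, hBx, le_two_mul_logb_of_two_pow_le Fintype.card_pos hΔ ?_⟩
  exact two_pow_card_support_le_of_minimal B hB hx fun x' hx' hBx' =>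
    hmin x' ⟨hx', hBx'.trans hBx⟩

lemma fromRows_replicateRow_one_mulVec_eq_iff {ι κ R : Type*} [Fintype κ] [Semiring R]
    (A : Matrix ι κ R) (v w : κ → R) :
    fromRows A (replicateRow Unit 1) *ᵥ v = fromRows A (replicateRow Unit 1) *ᵥ w ↔
      A *ᵥ v = A *ᵥ w ∧ ∑ j, v j = ∑ j, w j := by
  simp [fromRows_mulVec, replicateRow_mulVec_eq_const, one_dotProduct, funext_iff, Sum.forall]

/-- Support bound for combinatorial n-fold ILPs: any feasible system has a
nonnegative integer solution whose blocks each have support at most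
`2(r+1)·log₂(4(r+1)Δ)`. -/
theorem stmt9 (n r Δ : ℕ) (hΔ : 1 ≤ Δ) (t : Fin n → ℕ)
    (A : (k : Fin n) → Matrix (Fin r) (Fin (t k)) ℤ)
    (hA : ∀ k i j, |A k i j| ≤ (Δ : ℤ))
    (bup : Fin r → ℤ) (blow : Fin n → ℤ)
    (hfeas : ∃ y : (k : Fin n) → Fin (t k) → ℤ, (∀ k j, 0 ≤ y k j) ∧
      (∑ k, (A k).mulVec (y k)) = bup ∧ (∀ k, ∑ j, y k j = blow k)) :
    ∃ x : (k : Fin n) → Fin (t k) → ℤ, (∀ k j, 0 ≤ x k j) ∧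
      (∑ k, (A k).mulVec (x k)) = bup ∧ (∀ k, ∑ j, x k j = blow k) ∧
      ∀ k, ((Finset.univ.filter (fun j => x k j ≠ 0)).card : ℝ) ≤
        2 * (r + 1) * Real.logb 2 (4 * (r + 1) * Δ) := by
  obtain ⟨y, hy, hyup, hylow⟩ := hfeas
  have hB : ∀ k i j, |fromRows (A k) (replicateRow Unit 1) i j| ≤ (Δ : ℤ) := by
    rintro k (i | i) j
    · exact hA k i j
    · simpa using hΔ
  choose x hx hxy hxcard using fun k =>
    exists_nonneg_mulVec_eq_card_support_le _ hΔ (hB k) (y := y k) (hy k)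
  simp only [fromRows_replicateRow_one_mulVec_eq_iff] at hxy
  refine ⟨x, hx, ?_, fun k => (hxy k).2.trans (hylow k), fun k => ?_⟩
  · rw [← hyup]
    exact sum_congr rfl fun k _ => (hxy k).1
  · simpa using hxcard k
end

section
/- Let σ be a schedule of N jobs, each with integer processing time in {1, ..., p_max} and at most d ≤ p_max distinct sizes, and let B be the set of machines whose load under σ exceeds p_max^4. Then there exists a job size that occurs at least p_max^2·|B| times among the jobs scheduled on machines in B. -/
open Finset

/-- Pigeonhole: if every machine in `B` has load exceeding `p_max^4`, then some
job size occurs at least `p_max² · |B|` times on the machines of `B`. -/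
theorem stmt12 (N M : ℕ) (pmax : ℕ) (p : Fin N → ℕ)
    (hp : ∀ j, 1 ≤ p j ∧ p j ≤ pmax)
    (σ : Fin N → Fin M) (B : Finset (Fin M))
    (hB : B = Finset.univ.filter
      (fun k => pmax ^ 4 < ∑ j ∈ Finset.univ.filter (fun j => σ j = k), p j)) :
    ∃ sz : ℕ, pmax ^ 2 * B.card ≤
      (Finset.univ.filter (fun j => p j = sz ∧ σ j ∈ B)).card := by
  rcases Nat.eq_zero_or_pos pmax with h0 | hpos
  · exact ⟨0, by simp [h0]⟩
  rcases B.eq_empty_or_nonempty with hBe | hBne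
  · exact ⟨0, by simp [hBe]⟩
  set J := Finset.univ.filter (fun j => σ j ∈ B) with hJ
  have hsum : ∑ k ∈ B, ∑ j ∈ Finset.univ.filter (fun j => σ j = k), p j = ∑ j ∈ J, p j :=
    Finset.sum_fiberwise_eq_sum_filter _ _ _ _
  have hlb : pmax ^ 4 * B.card < ∑ j ∈ J, p j := by
    rw [← hsum]
    have h1 : ∀ k ∈ B, pmax ^ 4 < ∑ j ∈ Finset.univ.filter (fun j => σ j = k), p j := by
      intro k hk
      rw [hB] at hk
      exact (Finset.mem_filter.mp hk).2
    calc pmax ^ 4 * B.card = ∑ _k ∈ B, pmax ^ 4 := by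
          rw [Finset.sum_const, smul_eq_mul, mul_comm]
      _ < ∑ k ∈ B, ∑ j ∈ Finset.univ.filter (fun j => σ j = k), p j :=
          Finset.sum_lt_sum_of_nonempty hBne h1
  have hub : ∑ j ∈ J, p j ≤ J.card * pmax := by
    calc ∑ j ∈ J, p j ≤ ∑ _j ∈ J, pmax := Finset.sum_le_sum (fun j _ => (hp j).2)
      _ = J.card * pmax := by rw [Finset.sum_const, smul_eq_mul]
  have hJcard : pmax ^ 3 * B.card < J.card := by
    have h := lt_of_lt_of_le hlb hub
    have h2 : pmax * (pmax ^ 3 * B.card) < pmax * J.card := by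
      have : pmax ^ 4 = pmax * pmax ^ 3 := by ring
      calc pmax * (pmax ^ 3 * B.card) = pmax ^ 4 * B.card := by ring
        _ < J.card * pmax := h
        _ = pmax * J.card := by ring
    exact Nat.lt_of_mul_lt_mul_left h2
  have hfib : J.card = ∑ sz ∈ Finset.Icc 1 pmax, (J.filter (fun j => p j = sz)).card := by
    apply Finset.card_eq_sum_card_fiberwise
    intro j _
    exact Finset.mem_Icc.mpr ⟨(hp j).1, (hp j).2⟩
  by_contra hcon
  push_neg at hcon
  have hlt : ∀ sz ∈ Finset.Icc 1 pmax,
      (J.filter (fun j => p j = sz)).card < pmax ^ 2 * B.card := by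
    intro sz _
    have heq : J.filter (fun j => p j = sz)
        = Finset.univ.filter (fun j => p j = sz ∧ σ j ∈ B) := by
      rw [hJ, Finset.filter_filter]
      apply Finset.filter_congr
      intro j _
      tauto
    rw [heq]
    exact hcon sz
  have hIcc : (Finset.Icc 1 pmax).Nonempty := ⟨1, Finset.mem_Icc.mpr ⟨le_refl 1, hpos⟩⟩
  have : J.card < ∑ _sz ∈ Finset.Icc 1 pmax, pmax ^ 2 * B.card := by
    rw [hfib]
    exact Finset.sum_lt_sum_of_nonempty hIcc hlt
  rw [Finset.sum_const, Nat.card_Icc, smul_eq_mul] at this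
  have : J.card < pmax ^ 3 * B.card := by
    have h3 : (pmax + 1 - 1) * (pmax ^ 2 * B.card) = pmax ^ 3 * B.card := by
      simp; ring
    rwa [h3] at this
  omega
end

section
/- Suppose jobs of d types with multiplicities n_j and sizes p_j, plus ℓ dummy jobs of size -1, exactly cover guessed machine loads: ∑_j n_j p_j - ℓ = ∑_k m_k T_k. If an assignment fills every small machine exactly to its target T_k, and fills every big machine to T_k minus a nonnegative multiple of a (for a fixed positive integer a), then the total size of unassigned real jobs minus unassigned dummy jobs is a nonnegative multiple of a. -/
open Finset

/-- Divisibility invariant: if jobs plus dummies exactly cover the targets, small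
machines are filled exactly and big machines miss their target by a nonnegative
multiple of `a`, then the total unassigned size is a nonnegative multiple of `a`. -/
theorem stmt13 (d M : ℕ) (njobs p : Fin d → ℤ) (ℓ : ℤ) (T : Fin M → ℤ)
    (a : ℤ) (ha : 0 < a)
    (hcover : (∑ j, njobs j * p j) - ℓ = ∑ k, T k)
    (load : Fin M → ℤ) (S : Finset (Fin M))
    (hsmall : ∀ k ∈ S, load k = T k)
    (hbig : ∀ k ∉ S, ∃ q : ℤ, 0 ≤ q ∧ load k = T k - a * q) :
    ∃ q : ℤ, 0 ≤ q ∧ ((∑ j, njobs j * p j) - ℓ) - (∑ k, load k) = a * q := by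
  choose q hq0 hqe using hbig
  refine ⟨∑ k ∈ Sᶜ.attach, q k.1 (Finset.mem_compl.mp k.2), ?_, ?_⟩
  · exact Finset.sum_nonneg fun k _ => hq0 _ _
  · have h2 : ∑ k ∈ Sᶜ.attach, a * q k.1 (Finset.mem_compl.mp k.2)
        = ∑ k ∈ Sᶜ, (T k - load k) := by
      rw [← Finset.sum_attach Sᶜ (fun k => T k - load k)]
      exact Finset.sum_congr rfl fun k _ => by
        rw [hqe k.1 (Finset.mem_compl.mp k.2)]; ring
    have h1 : ∑ k ∈ S, (T k - load k) = 0 :=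
      Finset.sum_eq_zero fun k hk => by rw [hsmall k hk]; ring
    rw [hcover, ← Finset.sum_sub_distrib, Finset.mul_sum, h2,
      ← Finset.sum_compl_add_sum S (fun k => T k - load k), h1, add_zero]
end

section
/- Let G = (V, E) be a graph with vertex cover C of size k, let π be an ordering of V extending a fixed ordering of C, and suppose two vertices u, v ∈ V \ C have the same neighborhood N(u) = N(v) ⊆ C and are placed in the same slot (i.e., between the same consecutive pair of cover vertices in π). Then swapping u and v in π does not change the total imbalance ι(π) = ∑_{w∈V} ||R(w)| - |L(w)||. -/
open Finset

/-- Swapping two independent vertices with the same neighborhood in the vertex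
cover, placed in the same slot of the ordering, does not change the total
imbalance. -/
theorem stmt19 {V : Type*} [Fintype V] [DecidableEq V]
    (G : SimpleGraph V) [DecidableRel G.Adj] (n : ℕ)
    (C : Finset V) (hC : ∀ a b, G.Adj a b → a ∈ C ∨ b ∈ C)
    (π : V → ℤ) (hπ : Function.Injective π)
    (u v : V) (hu : u ∉ C) (hv : v ∉ C)
    (hN : G.neighborFinset u = G.neighborFinset v)
    (hslot : ∀ c ∈ C, (π c < π u ↔ π c < π v)) :
    (∑ w : V, |(((G.neighborFinset w).filter
          (fun x => π (Equiv.swap u v w) < π (Equiv.swap u v x))).card : ℤ) -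
        (((G.neighborFinset w).filter
          (fun x => π (Equiv.swap u v x) < π (Equiv.swap u v w))).card : ℤ)|) =
    ∑ w : V, |(((G.neighborFinset w).filter (fun x => π w < π x)).card : ℤ) -
        (((G.neighborFinset w).filter (fun x => π x < π w)).card : ℤ)| := by
  classical
  have hC' : ∀ c ∈ C, (π u < π c ↔ π v < π c) := by
    intro c hc
    have h1 := hslot c hc
    have h2 : π c ≠ π u := fun h => hu (hπ h ▸ hc)
    have h3 : π c ≠ π v := fun h => hv (hπ h ▸ hc)
    omega
  have key : ∀ a b : V, G.Adj a b →
      (π (Equiv.swap u v a) < π (Equiv.swap u v b) ↔ π a < π b) := by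
    intro a b hab
    by_cases hau : a = u
    · subst hau
      have hbC : b ∈ C := (hC _ _ hab).resolve_left hu
      have hbu : b ≠ a := fun h => hu (h ▸ hbC)
      have hbv : b ≠ v := fun h => hv (h ▸ hbC)
      rw [Equiv.swap_apply_left, Equiv.swap_apply_of_ne_of_ne hbu hbv]
      exact (hC' b hbC).symm
    by_cases hav : a = v
    · subst hav
      have hbC : b ∈ C := (hC _ _ hab).resolve_left hv
      have hbu : b ≠ u := fun h => hu (h ▸ hbC)
      have hbv : b ≠ a := fun h => hv (h ▸ hbC)
      rw [Equiv.swap_apply_right, Equiv.swap_apply_of_ne_of_ne hbu hbv]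
      exact hC' b hbC
    by_cases hbu : b = u
    · subst hbu
      have haC : a ∈ C := (hC _ _ hab).resolve_right hu
      rw [Equiv.swap_apply_left, Equiv.swap_apply_of_ne_of_ne hau hav]
      exact (hslot a haC).symm
    by_cases hbv : b = v
    · subst hbv
      have haC : a ∈ C := (hC _ _ hab).resolve_right hv
      rw [Equiv.swap_apply_right, Equiv.swap_apply_of_ne_of_ne hau hav]
      exact hslot a haC
    · rw [Equiv.swap_apply_of_ne_of_ne hau hav,
        Equiv.swap_apply_of_ne_of_ne hbu hbv]
  refine Finset.sum_congr rfl fun w _ => ?_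
  have h1 : (G.neighborFinset w).filter
      (fun x => π (Equiv.swap u v w) < π (Equiv.swap u v x)) =
      (G.neighborFinset w).filter (fun x => π w < π x) := by
    apply Finset.filter_congr
    intro x hx
    exact key w x (by simpa using hx)
  have h2 : (G.neighborFinset w).filter
      (fun x => π (Equiv.swap u v x) < π (Equiv.swap u v w)) =
      (G.neighborFinset w).filter (fun x => π x < π w) := by
    apply Finset.filter_congr
    intro x hx
    exact key x w (G.adj_symm (by simpa using hx))
  rw [h1, h2]
end
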